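/- arXiv:2403.02847 — 2 statements merged into one kernel-verified Lean document; each statement's English description precedes it below -/
import Mathlib

section
/- Let H be a complex Hilbert space with dual H', and let b(·,·;s) = s·m(·,·) + a(·,·) where a is bounded by C and coercive with constant γ > 0 (uniformly for Re(s) ≥ α), and m is the pairing induced by a Gelfand triple. If p(s) ∈ H solves b(p(s), v; s) = ⟨q, v⟩ for all v ∈ H for a given q ∈ H', then ‖p(s)‖_H ≤ ‖q‖_{H'}/γ and ‖p(s)‖_{H'} ≤ (1/|s|)·(1 + C/γ)·‖q‖_{H'}. -/
open Complex

/-!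
Testing the variational equation with `v = p` and using coercivity gives
`γ‖p‖² ≤ Re ⟨q, p⟩ ≤ ‖q‖‖p‖`, hence the bound in `H`. For the dual norm, the equation says
`s · m p = q - a p` in `H'`, so `|s| ‖m p‖ ≤ ‖q‖ + C‖p‖`, and the first bound finishes it.
-/

lemma le_div_of_mul_sq_le_mul {γ c x : ℝ} (hγ : 0 < γ) (hc : 0 ≤ c) (hx : 0 ≤ x)
    (h : γ * x ^ 2 ≤ c * x) : x ≤ c / γ := by
  rcases hx.eq_or_lt with rfl | hx
  · positivity
  · rw [le_div_iff₀ hγ]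
    nlinarith

section

variable {𝕜 E : Type*} [RCLike 𝕜] [SeminormedAddCommGroup E] [NormedSpace 𝕜 E]

lemma norm_le_opNorm_div_of_mul_sq_le_re {γ : ℝ} (hγ : 0 < γ) (q : E →L[𝕜] 𝕜) (p : E)
    (h : γ * ‖p‖ ^ 2 ≤ RCLike.re (q p)) : ‖p‖ ≤ ‖q‖ / γ :=
  le_div_of_mul_sq_le_mul hγ (norm_nonneg q) (norm_nonneg p) <|
    h.trans <| (RCLike.re_le_norm _).trans (q.le_opNorm p)

lemma opNorm_le_of_mul_apply_add_eq {f q : E →L[𝕜] 𝕜} {g : E → 𝕜} {s : 𝕜} (hs : s ≠ 0)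
    {K : ℝ} (hK : 0 ≤ K) (hg : ∀ v, ‖g v‖ ≤ K * ‖v‖) (h : ∀ v, s * f v + g v = q v) :
    ‖f‖ ≤ (1 / ‖s‖) * (‖q‖ + K) := by
  have hs' : 0 < ‖s‖ := norm_pos_iff.mpr hs
  refine f.opNorm_le_bound (by positivity) fun v ↦ ?_
  have hsf : ‖s‖ * ‖f v‖ ≤ (‖q‖ + K) * ‖v‖ :=
    calc ‖s‖ * ‖f v‖ = ‖q v - g v‖ := by rw [← norm_mul, ← h v, add_sub_cancel_right]
      _ ≤ ‖q v‖ + ‖g v‖ := norm_sub_le _ _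
      _ ≤ ‖q‖ * ‖v‖ + K * ‖v‖ := add_le_add (q.le_opNorm v) (hg v)
      _ = (‖q‖ + K) * ‖v‖ := by ring
  rw [mul_assoc, one_div_mul_eq_div, le_div_iff₀ hs', mul_comm]
  exact hsf

end

theorem a_priori_estimates_laplace_domain_general
    (H : Type*) [NormedAddCommGroup H] [InnerProductSpace ℂ H]
    (m : H → (H →L[ℂ] ℂ))
    (a : H → H → ℂ) (C γ : ℝ) (hC : 0 < C) (hγ : 0 < γ)
    (habdd : ∀ u v : H, ‖a u v‖ ≤ C * ‖u‖ * ‖v‖)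
    (s : ℂ) (hs0 : s ≠ 0)
    (hcoer : ∀ u : H, γ * ‖u‖ ^ 2 ≤ (s * (m u) u + a u u).re)
    (q : H →L[ℂ] ℂ) (p : H)
    (hp : ∀ v : H, s * (m p) v + a p v = q v) :
    ‖p‖ ≤ ‖q‖ / γ ∧ ‖m p‖ ≤ (1 / ‖s‖) * (1 + C / γ) * ‖q‖ := by
  have hpH : ‖p‖ ≤ ‖q‖ / γ :=
    norm_le_opNorm_div_of_mul_sq_le_re (𝕜 := ℂ) hγ q p (hp p ▸ hcoer p)
  refine ⟨hpH, ?_⟩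
  calc ‖m p‖ ≤ (1 / ‖s‖) * (‖q‖ + C * ‖p‖) :=
        opNorm_le_of_mul_apply_add_eq hs0 (by positivity) (habdd p) hp
    _ ≤ (1 / ‖s‖) * (‖q‖ + C * (‖q‖ / γ)) := by gcongr
    _ = (1 / ‖s‖) * (1 + C / γ) * ‖q‖ := by ring

/-- A priori estimates in `H` and in the dual `H'` for the solution of
`b(p, v; s) = ⟨q, v⟩`, where `b(u,v;s) = s·m(u,v) + a(u,v)`, `a` is bounded by `C` and the
form is coercive with constant `γ`, and `m u = ⟨R u, ·⟩` is the Gelfand-triple pairing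
with `‖m u‖_{H'} ≤ ‖u‖`.  Then `‖p‖_H ≤ ‖q‖_{H'}/γ` and
`‖p‖_{H'} ≤ (1/|s|)(1 + C/γ)‖q‖_{H'}`. -/
theorem a_priori_estimates_laplace_domain
    (H : Type*) [NormedAddCommGroup H] [InnerProductSpace ℂ H] [CompleteSpace H]
    (m : H → (H →L[ℂ] ℂ)) (hm : ∀ u : H, ‖m u‖ ≤ ‖u‖)
    (a : H → H → ℂ) (C γ : ℝ) (hC : 0 < C) (hγ : 0 < γ)
    (habdd : ∀ u v : H, ‖a u v‖ ≤ C * ‖u‖ * ‖v‖)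
    (α : ℝ) (s : ℂ) (hsα : α ≤ s.re) (hs0 : s ≠ 0)
    (hcoer : ∀ u : H, γ * ‖u‖ ^ 2 ≤ (s * (m u) u + a u u).re)
    (q : H →L[ℂ] ℂ) (p : H)
    (hp : ∀ v : H, s * (m p) v + a p v = q v) :
    ‖p‖ ≤ ‖q‖ / γ ∧ ‖m p‖ ≤ (1 / ‖s‖) * (1 + C / γ) * ‖q‖ :=
  a_priori_estimates_laplace_domain_general H m a C γ hC hγ habdd s hs0 hcoer q p hp
end

section
/- Fix α ∈ ℝ, β > 0, λ ≥ 0 and η > 1. For every θ ∈ [0, 2π], writing w(θ) = α − β(ηe^{iθ}+1)/(ηe^{iθ}−1), one has |w(θ) + λ|² = (α + λ − β(η²−1)/(η²+1−2η cos θ))² + β²(2η sin θ/(η²+1−2η cos θ))², and this quantity is bounded below by min{ (α+λ−β(η−1)/(η+1))², (α+λ−β(η+1)/(η−1))² }. -/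
open Complex Real

/-!
The circle `|z| = η` is mapped by `z ↦ (z + 1) / (z - 1)` onto the circle whose diameter on the
real axis is `[(η - 1) / (η + 1), (η + 1) / (η - 1)]`; the explicit real and imaginary parts show
`y ^ 2 = (b - x) * (x - a)` for `x + y i = w(θ) + λ`, with `a, b` the endpoints scaled by `β` and
reflected about `α + λ`.
On such a circle `x ^ 2 + y ^ 2 = (a + b) x - a b` is affine in `x`, so it is bounded below by its
values `a ^ 2`, `b ^ 2` at the endpoints.
-/

theorem min_sq_le_sq_add_sq_of_sq_eq_mul {a b x y : ℝ} (h : y ^ 2 = (b - x) * (x - a)) :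
    min (a ^ 2) (b ^ 2) ≤ x ^ 2 + y ^ 2 := by
  have ha : x ^ 2 + y ^ 2 - a ^ 2 = (a + b) * (x - a) := by rw [h]; ring
  have hb : x ^ 2 + y ^ 2 - b ^ 2 = (a + b) * (x - b) := by rw [h]; ring
  have hprod : (a + b) * (x - a) * ((a + b) * (x - b)) ≤ 0 := by
    have : 0 ≤ (b - x) * (x - a) := h ▸ sq_nonneg y
    nlinarith [sq_nonneg (a + b)]
  rcases le_or_gt 0 ((a + b) * (x - a)) with hxa | hxa
  · exact min_le_of_left_le (by linarith)
  · exact min_le_of_right_le (by linarith [nonneg_of_mul_nonpos_right hprod hxa])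

theorem Complex.add_one_div_sub_one (z : ℂ) :
    (z + 1) / (z - 1) = ((normSq z - 1 : ℝ) - 2 * z.im * I) / normSq (z - 1) := by
  rw [div_eq_mul_inv, inv_def, ← mul_assoc, div_eq_mul_inv, ← ofReal_inv]
  congr 1
  apply Complex.ext <;> simp [normSq_apply] <;> ring

theorem Complex.ofReal_mul_exp_add_one_div_sub_one (η θ : ℝ) :
    (η * exp (θ * I) + 1) / (η * exp (θ * I) - 1) =
      ((η ^ 2 - 1 : ℝ) - (2 * η * Real.sin θ : ℝ) * I) / (η ^ 2 + 1 - 2 * η * Real.cos θ : ℝ) := by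
  have hsc := Real.sin_sq_add_cos_sq θ
  rw [add_one_div_sub_one]
  congr 3
  · simp only [normSq_apply, mul_re, mul_im, ofReal_re, ofReal_im, exp_ofReal_mul_I_re,
      exp_ofReal_mul_I_im]
    linear_combination η ^ 2 * hsc
  · simp only [mul_im, ofReal_re, ofReal_im, exp_ofReal_mul_I_re, exp_ofReal_mul_I_im, zero_mul,
      add_zero, ofReal_mul, ofReal_ofNat, mul_assoc]
  · simp only [normSq_apply, sub_re, sub_im, mul_re, mul_im, ofReal_re, ofReal_im, one_re, one_im,
      exp_ofReal_mul_I_re, exp_ofReal_mul_I_im]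
    linear_combination η ^ 2 * hsc

theorem sq_add_one_sub_two_mul_cos_ne_zero {η : ℝ} (h₁ : η ≠ 1) (h₂ : η ≠ -1) (θ : ℝ) :
    η ^ 2 + 1 - 2 * η * Real.cos θ ≠ 0 := by
  intro h
  have hsc := Real.sin_sq_add_cos_sq θ
  have hcos : η = Real.cos θ := by
    nlinarith [sq_nonneg (η - Real.cos θ), sq_nonneg (Real.sin θ)]
  rcases sq_eq_one_iff.1 (by nlinarith : η ^ 2 = 1) with h | h
  exacts [h₁ h, h₂ h]

theorem sq_sin_div_eq_mul {η : ℝ} (h₁ : η ≠ 1) (h₂ : η ≠ -1) (θ : ℝ) :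
    (2 * η * Real.sin θ / (η ^ 2 + 1 - 2 * η * Real.cos θ)) ^ 2 =
      ((η + 1) / (η - 1) - (η ^ 2 - 1) / (η ^ 2 + 1 - 2 * η * Real.cos θ)) *
        ((η ^ 2 - 1) / (η ^ 2 + 1 - 2 * η * Real.cos θ) - (η - 1) / (η + 1)) := by
  have hd := sq_add_one_sub_two_mul_cos_ne_zero h₁ h₂ θ
  have : η - 1 ≠ 0 := sub_ne_zero.2 h₁
  have : η + 1 ≠ 0 := by rwa [← sub_neg_eq_add, sub_ne_zero]
  field_simp
  linear_combination (4 * η ^ 4 - 4 * η ^ 2) * Real.sin_sq_add_cos_sq θ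

theorem abs_sq_mobius_shifted_general (α β lam η : ℝ) (hη : 1 < η) :
    ∀ θ ∈ Set.Icc (0 : ℝ) (2 * π),
      ‖(((α : ℂ) - β * (η * Complex.exp (θ * Complex.I) + 1) /
              (η * Complex.exp (θ * Complex.I) - 1)) + lam)‖ ^ 2
        = (α + lam - β * (η ^ 2 - 1) / (η ^ 2 + 1 - 2 * η * Real.cos θ)) ^ 2
          + β ^ 2 * (2 * η * Real.sin θ / (η ^ 2 + 1 - 2 * η * Real.cos θ)) ^ 2 ∧
      min ((α + lam - β * (η - 1) / (η + 1)) ^ 2)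
          ((α + lam - β * (η + 1) / (η - 1)) ^ 2)
        ≤ ‖(((α : ℂ) - β * (η * Complex.exp (θ * Complex.I) + 1) /
                (η * Complex.exp (θ * Complex.I) - 1)) + lam)‖ ^ 2 := by
  intro θ _
  set d := η ^ 2 + 1 - 2 * η * Real.cos θ with hd
  have hw : (α : ℂ) - β * (η * exp (θ * I) + 1) / (η * exp (θ * I) - 1) + lam =
      ((α + lam - β * ((η ^ 2 - 1) / d) : ℝ) : ℂ) +
        ((β * (2 * η * Real.sin θ / d) : ℝ) : ℂ) * I := by
    rw [mul_div_assoc, ofReal_mul_exp_add_one_div_sub_one, ← hd]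
    push_cast
    ring
  have hy := sq_sin_div_eq_mul hη.ne' (by linarith : η ≠ -1) θ
  rw [← hd] at hy
  rw [hw, Complex.sq_norm, normSq_add_mul_I]
  refine ⟨by ring, min_sq_le_sq_add_sq_of_sq_eq_mul ?_⟩
  rw [mul_pow, hy]
  ring

/-- Fix `α ∈ ℝ`, `β > 0`, `λ ≥ 0`, `η > 1`.  For `θ ∈ [0,2π]` and
`w(θ) = α − β(ηe^{iθ}+1)/(ηe^{iθ}−1)`, one has the explicit formula for `|w(θ) + λ|²`
and the lower bound by `min{(α+λ−β(η−1)/(η+1))², (α+λ−β(η+1)/(η−1))²}`. -/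
theorem abs_sq_mobius_shifted (α β lam η : ℝ) (hβ : 0 < β) (hlam : 0 ≤ lam)
    (hη : 1 < η) :
    ∀ θ ∈ Set.Icc (0 : ℝ) (2 * π),
      ‖(((α : ℂ) - β * (η * Complex.exp (θ * Complex.I) + 1) /
              (η * Complex.exp (θ * Complex.I) - 1)) + lam)‖ ^ 2
        = (α + lam - β * (η ^ 2 - 1) / (η ^ 2 + 1 - 2 * η * Real.cos θ)) ^ 2
          + β ^ 2 * (2 * η * Real.sin θ / (η ^ 2 + 1 - 2 * η * Real.cos θ)) ^ 2 ∧
      min ((α + lam - β * (η - 1) / (η + 1)) ^ 2)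
          ((α + lam - β * (η + 1) / (η - 1)) ^ 2)
        ≤ ‖(((α : ℂ) - β * (η * Complex.exp (θ * Complex.I) + 1) /
                (η * Complex.exp (θ * Complex.I) - 1)) + lam)‖ ^ 2 :=
  abs_sq_mobius_shifted_general α β lam η hη
end
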